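/- arXiv:2112.10412 — 4 statements merged into one kernel-verified Lean document; each statement's English description precedes it below -/
import Mathlib

section
/- Let z : ℝ → ℝ be a nonnegative, absolutely continuous function with z(0) = 0 whose derivative satisfies z'(θ) = f(θ) − ν when z(θ) > 0 and z'(θ) = max(f(θ) − ν, 0) when z(θ) = 0, where f : ℝ → ℝ is measurable and nonnegative and ν > 0. Then for all θ ≥ 0, z(θ) ≤ ∫₀^θ max(f(s) − ν, 0) ds. -/
open MeasureTheory

/-- A fluid queue with capacity `ν` and measurable nonnegative inflow `f`:
the queue length `z` (absolutely continuous, written as the integral of its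
derivative `g`) is bounded by the integral of the positive part of the excess
inflow. -/
theorem queue_bounded_by_excess_inflow
    (f z g : ℝ → ℝ) (ν : ℝ) (hν : 0 < ν)
    (hf_meas : Measurable f) (hf_nonneg : ∀ θ, 0 ≤ f θ)
    (hz_nonneg : ∀ θ, 0 ≤ z θ) (hz0 : z 0 = 0)
    (hg_int : ∀ θ : ℝ, IntervalIntegrable g volume 0 θ)
    (hac : ∀ θ : ℝ, z θ = ∫ s in (0:ℝ)..θ, g s)
    (hderiv : ∀ᵐ s : ℝ, 0 ≤ s →
      (0 < z s → g s = f s - ν) ∧ (z s = 0 → g s = max (f s - ν) 0)) :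
    ∀ θ : ℝ, 0 ≤ θ → z θ ≤ ∫ s in (0:ℝ)..θ, max (f s - ν) 0 := by
  intro θ hθ
  -- a.e. on s ≥ 0, max (f s - ν) 0 = max (g s) 0
  have key : ∀ᵐ s : ℝ, 0 ≤ s → max (f s - ν) 0 = max (g s) 0 := by
    filter_upwards [hderiv] with s hs hs0
    rcases lt_or_eq_of_le (hz_nonneg s) with hpos | hzero
    · rw [(hs hs0).1 hpos]
    · have hg := (hs hs0).2 hzero.symm
      rw [hg, max_eq_left (le_max_right _ _)]
  -- max g 0 is interval integrable
  have hfun : (fun s => max (g s) 0) = fun s => (g s + |g s|) / 2 := by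
    funext s
    rcases le_total 0 (g s) with h | h
    · rw [max_eq_left h, abs_of_nonneg h]; ring
    · rw [max_eq_right h, abs_of_nonpos h]; ring
  have hmax_int : IntervalIntegrable (fun s => max (g s) 0) volume 0 θ := by
    rw [hfun]
    exact ((hg_int θ).add ((hg_int θ).norm)).div_const 2
  have h1 : z θ ≤ ∫ s in (0:ℝ)..θ, max (g s) 0 := by
    rw [hac θ]
    exact intervalIntegral.integral_mono_on hθ (hg_int θ) hmax_int
      (fun x _ => le_max_left _ _)
  have h2 : (∫ s in (0:ℝ)..θ, max (f s - ν) 0) = ∫ s in (0:ℝ)..θ, max (g s) 0 := by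
    apply intervalIntegral.integral_congr_ae
    filter_upwards [key] with s hs hmem
    exact hs (le_of_lt (Set.uIoc_of_le hθ ▸ hmem : s ∈ Set.Ioc 0 θ).1)
  rw [h2]
  exact h1
end

section
/- Let z : [0,∞) → ℝ be nonnegative with z(0)=0, and suppose z is locally Lipschitz and at every point of differentiability z'(θ) ≤ f(θ) − ν whenever z(θ) > 0, where f is integrable with ∫₀^∞ max(f(s) − ν, 0) ds < ∞ and f(θ) ≤ ν for all θ ≥ T for some T ≥ 0. Then z is bounded on [0,∞). -/
/-!
Being locally Lipschitz, `z` is absolutely continuous on `[0, θ]`, so `z θ = ∫₀^θ z'`.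
Where `z > 0`, `z' ≤ f - ν`; where `z = 0`, the nonnegative `z` has a minimum, so `z' = 0`. Hence
`z θ ≤ ∫₀^∞ (f - ν)⁺`, which is finite.
-/

open MeasureTheory Set Filter Topology

theorem AbsolutelyContinuousOnInterval.sub_le_integral_of_deriv_le {w φ : ℝ → ℝ} {a b : ℝ}
    (hw : AbsolutelyContinuousOnInterval w a b) (hab : a ≤ b)
    (hφ : IntervalIntegrable φ volume a b) (hle : ∀ t ∈ Ioo a b, deriv w t ≤ φ t) :
    w b - w a ≤ ∫ t in a..b, φ t := by
  rw [← hw.integral_deriv_eq_sub]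
  exact intervalIntegral.integral_mono_on_of_le_Ioo hab hw.intervalIntegrable_deriv hφ hle

/-- `deriv w t = 0` is also the junk value where `w` is not differentiable. -/
theorem deriv_le_max_zero_of_eventually_nonneg {w g : ℝ → ℝ} {t : ℝ}
    (hnonneg : ∀ᶠ u in 𝓝 t, 0 ≤ w u)
    (hle : DifferentiableAt ℝ w t → 0 < w t → deriv w t ≤ g t) :
    deriv w t ≤ max (g t) 0 := by
  by_cases hd : DifferentiableAt ℝ w t
  · rcases hnonneg.self_of_nhds.lt_or_eq with hpos | hzero
    · exact (hle hd hpos).trans (le_max_left _ _)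
    · have hmin : IsLocalMin w t := hnonneg.mono fun u hu => hzero ▸ hu
      rw [hmin.deriv_eq_zero]
      exact le_max_right _ _
  · rw [deriv_zero_of_not_differentiableAt hd]
    exact le_max_right _ _

theorem queue_remains_bounded_general
    (z f : ℝ → ℝ) (ν : ℝ)
    (hz_nonneg : ∀ θ, 0 ≤ θ → 0 ≤ z θ) (hz0 : z 0 = 0)
    (hlip : LocallyLipschitz z)
    (hderiv : ∀ θ, 0 ≤ θ → DifferentiableAt ℝ z θ → 0 < z θ →
      deriv z θ ≤ f θ - ν)
    (hexcess_int : IntegrableOn (fun s => max (f s - ν) 0) (Ici 0)) :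
    ∃ B : ℝ, ∀ θ, 0 ≤ θ → z θ ≤ B := by
  refine ⟨∫ s in Ici 0, max (f s - ν) 0, fun θ hθ => ?_⟩
  obtain ⟨K, hK⟩ :=
    (hlip.locallyLipschitzOn (s := uIcc 0 θ)).exists_lipschitzOnWith_of_compact isCompact_uIcc
  have hexcess_le : ∀ t ∈ Ioo 0 θ, deriv z t ≤ max (f t - ν) 0 := fun t ht =>
    deriv_le_max_zero_of_eventually_nonneg (g := fun s => f s - ν)
      ((lt_mem_nhds ht.1).mono fun u hu => hz_nonneg u hu.le) (hderiv t ht.1.le)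
  have hexcess_intervalIntegrable : IntervalIntegrable (fun s => max (f s - ν) 0) volume 0 θ :=
    (hexcess_int.mono_set (uIcc_of_le hθ ▸ Icc_subset_Ici_self)).intervalIntegrable
  calc z θ = z θ - z 0 := by rw [hz0, sub_zero]
    _ ≤ ∫ t in 0..θ, max (f t - ν) 0 :=
      hK.absolutelyContinuousOnInterval.sub_le_integral_of_deriv_le hθ
        hexcess_intervalIntegrable hexcess_le
    _ ≤ ∫ t in Ici 0, max (f t - ν) 0 := by
      rw [intervalIntegral.integral_of_le hθ]
      exact setIntegral_mono_set hexcess_int (ae_of_all _ fun _ => le_max_right _ _)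
        (Ioc_subset_Icc_self.trans Icc_subset_Ici_self).eventuallyLE

/-- A queue fed by an inflow that eventually never exceeds the service
capacity `ν`, with finite total excess inflow, remains bounded. -/
theorem queue_remains_bounded
    (z f : ℝ → ℝ) (ν T : ℝ)
    (hz_nonneg : ∀ θ, 0 ≤ θ → 0 ≤ z θ) (hz0 : z 0 = 0)
    (hlip : LocallyLipschitz z)
    (hderiv : ∀ θ, 0 ≤ θ → DifferentiableAt ℝ z θ → 0 < z θ →
      deriv z θ ≤ f θ - ν)
    (hf_int : IntegrableOn f (Ici 0))
    (hexcess_int : IntegrableOn (fun s => max (f s - ν) 0) (Ici 0))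
    (hT : 0 ≤ T) (hev : ∀ θ, T ≤ θ → f θ ≤ ν) :
    ∃ B : ℝ, ∀ θ, 0 ≤ θ → z θ ≤ B :=
  queue_remains_bounded_general z f ν hz_nonneg hz0 hlip hderiv hexcess_int
end

section
/- Let G = (V,E) be a finite directed graph with arc capacities ν_e > 0, and suppose x : E → ℝ is a circulation (flow conservation at every node) with 0 ≤ x_e for all e. Suppose ℓ' : V → ℝ satisfies: for every arc e = (v,w), if ℓ'_v ≤ z < ℓ'_w for some real z then x_e = ν_e ℓ'_w, and if ℓ'_w ≤ z < ℓ'_v then x_e = ν_e ℓ'_w. Then for every z ∈ ℝ, letting V_z = {v : ℓ'_v ≤ z}, we have ∑_{e ∈ δ⁺(V_z)} ν_e z ≤ ∑_{e ∈ δ⁻(V_z)} ν_e z, where δ⁺(V_z), δ⁻(V_z) denote arcs leaving and entering V_z with x_e > 0 or with the stated property; moreover the inequality is strict for z > 0 whenever δ⁺(V_z) is nonempty. -/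
open Finset

/-- The key cut inequality for a circulation satisfying the thin-flow
condition on arcs crossing a level set of `ℓ'`. -/
theorem cut_inequality_level_sets
    {V E : Type*} [Fintype V] [Fintype E] [DecidableEq V]
    (src tgt : E → V) (ν x : E → ℝ) (ℓ' : V → ℝ)
    (hν : ∀ e, 0 < ν e) (hx_nonneg : ∀ e, 0 ≤ x e)
    -- x is a circulation
    (hcirc : ∀ v : V,
      (∑ e ∈ univ.filter (fun e => src e = v), x e) =
      (∑ e ∈ univ.filter (fun e => tgt e = v), x e))
    -- thin-flow condition on crossing arcs
    (hcross : ∀ (e : E) (z : ℝ),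
      (ℓ' (src e) ≤ z ∧ z < ℓ' (tgt e)) ∨ (ℓ' (tgt e) ≤ z ∧ z < ℓ' (src e)) →
      x e = ν e * ℓ' (tgt e)) :
    ∀ z : ℝ,
      (∑ e ∈ univ.filter (fun e => ℓ' (src e) ≤ z ∧ z < ℓ' (tgt e)), ν e * z) ≤
      (∑ e ∈ univ.filter (fun e => ℓ' (tgt e) ≤ z ∧ z < ℓ' (src e)), ν e * z) ∧
      (0 < z →
        (univ.filter (fun e => ℓ' (src e) ≤ z ∧ z < ℓ' (tgt e))).Nonempty →
        (∑ e ∈ univ.filter (fun e => ℓ' (src e) ≤ z ∧ z < ℓ' (tgt e)), ν e * z) <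
        (∑ e ∈ univ.filter (fun e => ℓ' (tgt e) ≤ z ∧ z < ℓ' (src e)), ν e * z)) := by
  intro z
  classical
  -- Step 1: total flow out of the level set equals total flow into it.
  have h1 : (∑ e ∈ univ.filter (fun e => ℓ' (src e) ≤ z), x e) =
      (∑ e ∈ univ.filter (fun e => ℓ' (tgt e) ≤ z), x e) := by
    have hs := Finset.sum_fiberwise_eq_sum_filter univ
      (univ.filter (fun v => ℓ' v ≤ z)) src x
    have ht := Finset.sum_fiberwise_eq_sum_filter univ
      (univ.filter (fun v => ℓ' v ≤ z)) tgt x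
    simp only [mem_filter, mem_univ, true_and] at hs ht
    rw [← hs, ← ht]
    exact Finset.sum_congr rfl fun v _ => hcirc v
  -- Step 2: split according to whether the other endpoint is in the level set.
  have h2 : (∑ e ∈ univ.filter (fun e => ℓ' (src e) ≤ z ∧ z < ℓ' (tgt e)), x e) =
      (∑ e ∈ univ.filter (fun e => ℓ' (tgt e) ≤ z ∧ z < ℓ' (src e)), x e) := by
    have hsplit1 := Finset.sum_filter_add_sum_filter_not
      (univ.filter (fun e => ℓ' (src e) ≤ z)) (fun e => ℓ' (tgt e) ≤ z) x
    have hsplit2 := Finset.sum_filter_add_sum_filter_not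
      (univ.filter (fun e => ℓ' (tgt e) ≤ z)) (fun e => ℓ' (src e) ≤ z) x
    simp only [filter_filter] at hsplit1 hsplit2
    have e1 : (univ.filter (fun e => ℓ' (src e) ≤ z ∧ ¬ ℓ' (tgt e) ≤ z)) =
        (univ.filter (fun e => ℓ' (src e) ≤ z ∧ z < ℓ' (tgt e))) := by
      apply filter_congr; intro e _; simp [not_le]
    have e2 : (univ.filter (fun e => ℓ' (tgt e) ≤ z ∧ ¬ ℓ' (src e) ≤ z)) =
        (univ.filter (fun e => ℓ' (tgt e) ≤ z ∧ z < ℓ' (src e))) := by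
      apply filter_congr; intro e _; simp [not_le]
    have e3 : (univ.filter (fun e => ℓ' (tgt e) ≤ z ∧ ℓ' (src e) ≤ z)) =
        (univ.filter (fun e => ℓ' (src e) ≤ z ∧ ℓ' (tgt e) ≤ z)) := by
      apply filter_congr; intro e _; simp [and_comm]
    rw [e1] at hsplit1
    rw [e2, e3] at hsplit2
    have := h1
    linarith [hsplit1, hsplit2]
  -- Comparisons on each side.
  have hout_le : ∀ e ∈ univ.filter (fun e => ℓ' (src e) ≤ z ∧ z < ℓ' (tgt e)),
      ν e * z ≤ x e := by
    intro e he
    simp only [mem_filter, mem_univ, true_and] at he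
    rw [hcross e z (Or.inl he)]
    exact mul_le_mul_of_nonneg_left he.2.le (hν e).le
  have hout_lt : ∀ e ∈ univ.filter (fun e => ℓ' (src e) ≤ z ∧ z < ℓ' (tgt e)),
      ν e * z < x e := by
    intro e he
    simp only [mem_filter, mem_univ, true_and] at he
    rw [hcross e z (Or.inl he)]
    exact mul_lt_mul_of_pos_left he.2 (hν e)
  have hin_le : ∀ e ∈ univ.filter (fun e => ℓ' (tgt e) ≤ z ∧ z < ℓ' (src e)),
      x e ≤ ν e * z := by
    intro e he
    simp only [mem_filter, mem_univ, true_and] at he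
    rw [hcross e z (Or.inr he)]
    exact mul_le_mul_of_nonneg_left he.1 (hν e).le
  have hle1 : (∑ e ∈ univ.filter (fun e => ℓ' (src e) ≤ z ∧ z < ℓ' (tgt e)), ν e * z) ≤
      (∑ e ∈ univ.filter (fun e => ℓ' (src e) ≤ z ∧ z < ℓ' (tgt e)), x e) :=
    Finset.sum_le_sum hout_le
  have hle2 : (∑ e ∈ univ.filter (fun e => ℓ' (tgt e) ≤ z ∧ z < ℓ' (src e)), x e) ≤
      (∑ e ∈ univ.filter (fun e => ℓ' (tgt e) ≤ z ∧ z < ℓ' (src e)), ν e * z) :=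
    Finset.sum_le_sum hin_le
  refine ⟨by linarith, fun _ hne => ?_⟩
  have hlt : (∑ e ∈ univ.filter (fun e => ℓ' (src e) ≤ z ∧ z < ℓ' (tgt e)), ν e * z) <
      (∑ e ∈ univ.filter (fun e => ℓ' (src e) ≤ z ∧ z < ℓ' (tgt e)), x e) :=
    Finset.sum_lt_sum_of_nonempty hne hout_lt
  linarith
end

section
/- Suppose T_e : ℝ → ℝ are functions with T_e(θ) ≥ θ for all θ and all arcs e, and ℓ_v(θ) is defined as the minimum over s-v paths of the composed exit times. If for all θ ≥ θ* and all v, ℓ_v(θ) = θ + d_v for constants d_v with d_s = 0, and every arc e = (v,w) with z_e(ℓ_v(θ)) > 0 satisfies ℓ_w(θ) = T_e(ℓ_v(θ)) where T_e(ξ) = ξ + z_e(ξ)/ν_e + τ_e, then for every arc e = (v,w) and all θ ≥ θ*, z_e(θ + d_v) = ν_e · max(d_w − d_v − τ_e, 0)_+ whenever z_e(θ + d_v) > 0; in particular all queue lengths z_e(ℓ_v(θ)) are constant in θ for θ ≥ θ*. -/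
/-- If from some time `θ*` on all labels satisfy `ℓ_v(θ) = θ + d_v` with
`d_s = 0`, and every arc with positive queue is active, then every positive
queue length equals `ν_e · max(d_w − d_v − τ_e, 0)`; in particular all queue
lengths seen by the labels are eventually constant. -/
theorem steady_state_queues_constant
    {V E : Type*} [Fintype V] [Fintype E]
    (src tgt : E → V) (s : V)
    (ν τ : E → ℝ) (hν : ∀ e, 0 < ν e) (hτ : ∀ e, 0 ≤ τ e)
    (z : E → ℝ → ℝ) (hz : ∀ e ξ, 0 ≤ z e ξ)
    (T : E → ℝ → ℝ)
    (hT : ∀ e ξ, T e ξ = ξ + z e ξ / ν e + τ e)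
    (hTid : ∀ e ξ, ξ ≤ T e ξ)
    (ℓ : V → ℝ → ℝ) (d : V → ℝ) (θs : ℝ)
    (hds : d s = 0)
    (hsteady : ∀ (v : V) (θ : ℝ), θs ≤ θ → ℓ v θ = θ + d v)
    (hactive : ∀ (e : E) (θ : ℝ), θs ≤ θ →
      0 < z e (ℓ (src e) θ) → ℓ (tgt e) θ = T e (ℓ (src e) θ)) :
    ∀ (e : E) (θ : ℝ), θs ≤ θ →
      0 < z e (θ + d (src e)) →
      z e (θ + d (src e)) = ν e * max (d (tgt e) - d (src e) - τ e) 0 := by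
  intro e θ hθ hpos
  have hz' : 0 < z e (ℓ (src e) θ) := by rwa [hsteady (src e) θ hθ]
  have h := hactive e θ hθ hz'
  rw [hsteady (tgt e) θ hθ, hT, hsteady (src e) θ hθ] at h
  have hzeq : z e (θ + d (src e)) = ν e * (d (tgt e) - d (src e) - τ e) := by
    have hν' := (hν e).ne'
    field_simp at h ⊢
    linarith
  have hposd : 0 < d (tgt e) - d (src e) - τ e := by
    by_contra hle
    push_neg at hle
    nlinarith [hν e, hpos]
  rw [hzeq, max_eq_left hposd.le]
end
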